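/- arXiv:2106.13342 — 7 statements merged into one kernel-verified Lean document; each statement's English description precedes it below -/
import Mathlib

section
/- Let n ≥ 1 be a natural number, let i, j be natural numbers with 1 ≤ i, j ≤ n and i ≠ j, let x = [xl, xr] and y = [yl, yr] be closed real intervals (xl ≤ xr, yl ≤ yr), and let ε > 0 be a real number such that n·ε < |p − q| for all p, q ∈ {xl, xr, yl, yr} with p ≠ q. Then: (a) the shifted intervals [xl + i·ε, xr + n·ε] and [yl + j·ε, yr + n·ε] have nonempty intersection if and only if [xl, xr] and [yl, yr] have nonempty intersection; and (b) the shifted left endpoints are distinct: xl + i·ε ≠ yl + j·ε. -/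
/-- The ε-shift transformation. Let `n ≥ 1`, `1 ≤ i, j ≤ n` with
`i ≠ j`, let `[xl, xr]` and `[yl, yr]` be closed real intervals, and let `ε > 0`
satisfy `n·ε < |p − q|` for all distinct `p, q ∈ {xl, xr, yl, yr}`. Then:
(a) `[xl + i·ε, xr + n·ε]` and `[yl + j·ε, yr + n·ε]` intersect iff `[xl, xr]` and
`[yl, yr]` intersect; and (b) `xl + i·ε ≠ yl + j·ε`. -/
theorem epsilon_shift_preserves_intersection
    (n i j : ℕ) (hn : 1 ≤ n) (hi1 : 1 ≤ i) (hin : i ≤ n) (hj1 : 1 ≤ j) (hjn : j ≤ n)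
    (hij : i ≠ j)
    (xl xr yl yr : ℝ) (hx : xl ≤ xr) (hy : yl ≤ yr)
    (ε : ℝ) (hε : 0 < ε)
    (hsep : ∀ p ∈ ({xl, xr, yl, yr} : Set ℝ), ∀ q ∈ ({xl, xr, yl, yr} : Set ℝ),
      p ≠ q → (n : ℝ) * ε < |p - q|) :
    ((Set.Icc (xl + (i : ℝ) * ε) (xr + (n : ℝ) * ε) ∩
        Set.Icc (yl + (j : ℝ) * ε) (yr + (n : ℝ) * ε)).Nonempty ↔
      (Set.Icc xl xr ∩ Set.Icc yl yr).Nonempty) ∧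
    xl + (i : ℝ) * ε ≠ yl + (j : ℝ) * ε := by
  have hie : (i : ℝ) * ε ≤ (n : ℝ) * ε :=
    mul_le_mul_of_nonneg_right (Nat.cast_le.mpr hin) hε.le
  have hje : (j : ℝ) * ε ≤ (n : ℝ) * ε :=
    mul_le_mul_of_nonneg_right (Nat.cast_le.mpr hjn) hε.le
  have hi0 : 0 ≤ (i : ℝ) * ε := by positivity
  have hj0 : 0 ≤ (j : ℝ) * ε := by positivity
  have key : ∀ a ∈ ({xl, xr, yl, yr} : Set ℝ), ∀ b ∈ ({xl, xr, yl, yr} : Set ℝ),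
      ∀ c : ℝ, 0 ≤ c → c ≤ (n : ℝ) * ε → (a + c ≤ b + (n : ℝ) * ε ↔ a ≤ b) := by
    intro a ha b hb c hc0 hcn
    constructor
    · intro h
      by_contra hab
      push_neg at hab
      have hne : a ≠ b := ne_of_gt hab
      have := hsep a ha b hb hne
      rw [abs_of_pos (by linarith)] at this
      linarith
    · intro h; linarith
  constructor
  · rw [Set.Icc_inter_Icc, Set.nonempty_Icc, Set.Icc_inter_Icc, Set.nonempty_Icc,
      sup_le_iff, sup_le_iff, le_inf_iff, le_inf_iff, le_inf_iff, le_inf_iff]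
    have k1 := key xl (by simp) yr (by simp [Set.mem_insert_iff]) ((i:ℝ)*ε) hi0 hie
    have k2 := key yl (by simp [Set.mem_insert_iff]) xr (by simp [Set.mem_insert_iff]) ((j:ℝ)*ε) hj0 hje
    constructor
    · rintro ⟨⟨h1, h2⟩, h3, h4⟩
      exact ⟨⟨hx, k1.mp h2⟩, k2.mp h3, hy⟩
    · rintro ⟨⟨_, h2⟩, h3, _⟩
      exact ⟨⟨by linarith, k1.mpr h2⟩, k2.mpr h3, by linarith⟩
  · intro h
    by_cases hxy : xl = yl
    · subst hxy
      have : (i : ℝ) = (j : ℝ) := by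
        have := mul_right_cancel₀ (ne_of_gt hε) (by linarith : (i:ℝ)*ε = (j:ℝ)*ε)
        exact this
      exact hij (Nat.cast_injective this)
    · have hs := hsep xl (by simp) yl (by simp [Set.mem_insert_iff]) hxy
      have habs : |xl - yl| = |(j : ℝ) - i| * ε := by
        rw [show xl - yl = ((j:ℝ) - i) * ε by ring_nf; linarith, abs_mul,
          abs_of_pos hε]
      have hji : |(j : ℝ) - i| ≤ (n : ℝ) := by
        rw [abs_sub_le_iff]
        constructor <;> [skip; skip] <;>
          · have := Nat.cast_le (α := ℝ) |>.mpr hjn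
            have := Nat.cast_le (α := ℝ) |>.mpr hin
            have : (0:ℝ) ≤ i := Nat.cast_nonneg i
            have : (0:ℝ) ≤ j := Nat.cast_nonneg j
            linarith [Nat.cast_le (α := ℝ) |>.mpr hjn, Nat.cast_le (α := ℝ) |>.mpr hin]
      have : |xl - yl| ≤ (n : ℝ) * ε := by
        rw [habs]
        exact mul_le_mul_of_nonneg_right hji hε.le
      linarith
end

section
/- Fix h : ℕ and naturals a, b with a < b ≤ 2^h. The canonical partition CP_h(a, b) is a partition of {m ∈ ℕ : a ≤ m < b}: the segments seg_h(u) for u ∈ CP_h(a, b) are pairwise disjoint, and every natural number m with a ≤ m < b lies in seg_h(u) for exactly one u ∈ CP_h(a, b). -/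
/-- The value of a bitstring (most significant bit first):
`val [] = 0` and `val (u ++ [b]) = 2 * val u + (if b then 1 else 0)`. -/
def bitVal (u : List Bool) : ℕ :=
  u.foldl (fun n b => 2 * n + (if b then 1 else 0)) 0

/-- The segment of a bitstring `u` (with `|u| ≤ h`) in the perfect segment tree of
height `h`: `seg_h(u) = {m : val u · 2^(h−|u|) ≤ m < (val u + 1) · 2^(h−|u|)}`. -/
def seg (h : ℕ) (u : List Bool) : Set ℕ :=
  {m | bitVal u * 2 ^ (h - u.length) ≤ m ∧ m < (bitVal u + 1) * 2 ^ (h - u.length)}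

/-- The canonical partition `CP_h(a, b)` of the interval `{m : a ≤ m < b}` in the
perfect segment tree of height `h`: the bitstrings `u` with `|u| ≤ h` whose segment is
contained in `[a, b)` and such that no proper prefix of `u` has its segment contained
in `[a, b)`. -/
def CP (h a b : ℕ) : Set (List Bool) :=
  {u | u.length ≤ h ∧ seg h u ⊆ Set.Ico a b ∧
    ∀ u' : List Bool, u' <+: u → u' ≠ u → ¬ seg h u' ⊆ Set.Ico a b}

/-!
The segments of the perfect binary tree of height `h` are laminar: `m ∈ seg_h(u)` iff
`m / 2^(h-|u|) = val u`, so if two segments meet, the shorter bitstring is the prefix of the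
longer one of its length. Two members of `CP_h(a, b)` sharing a point are therefore
prefix-comparable, and minimality forces them to be equal. For existence, the leaf of `m`
(the length-`h` bitstring of value `m`) has segment `{m} ⊆ [a, b)`, and its shortest prefix
whose segment still lies in `[a, b)` belongs to `CP_h(a, b)`.
-/

theorem List.exists_minimal_prefix {α : Type*} (P : List α → Prop) (w : List α) (hw : P w) :
    ∃ u, u <+: w ∧ P u ∧ ∀ u', u' <+: u → u' ≠ u → ¬ P u' := by
  by_cases hmin : ∀ u', u' <+: w → u' ≠ w → ¬ P u'
  · exact ⟨w, List.prefix_refl w, hw, hmin⟩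
  · push Not at hmin
    obtain ⟨u', hu'w, hne, hu'⟩ := hmin
    have : u'.length < w.length :=
      lt_of_le_of_ne hu'w.length_le fun hlen => hne (hu'w.eq_of_length hlen)
    obtain ⟨u, huu', hu, humin⟩ := exists_minimal_prefix P u' hu'
    exact ⟨u, huu'.trans hu'w, hu, humin⟩
termination_by w.length

lemma bitVal_append_singleton (u : List Bool) (b : Bool) :
    bitVal (u ++ [b]) = 2 * bitVal u + (if b then 1 else 0) := by
  simp [bitVal, List.foldl_append]

lemma bitVal_lt (u : List Bool) : bitVal u < 2 ^ u.length := by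
  induction u using List.reverseRecOn with
  | nil => simp [bitVal]
  | append_singleton u b ih =>
    rw [bitVal_append_singleton, List.length_append, List.length_singleton, pow_succ]
    cases b <;> simp <;> omega

lemma bitVal_append (u w : List Bool) :
    bitVal (u ++ w) = bitVal u * 2 ^ w.length + bitVal w := by
  induction w using List.reverseRecOn with
  | nil => simp [bitVal]
  | append_singleton w c ih =>
    rw [← List.append_assoc, bitVal_append_singleton, bitVal_append_singleton, ih,
      List.length_append, List.length_singleton, pow_succ]
    ring

lemma bitVal_append_div (u w : List Bool) : bitVal (u ++ w) / 2 ^ w.length = bitVal u := by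
  rw [bitVal_append, Nat.mul_comm, Nat.mul_add_div (by positivity),
    Nat.div_eq_of_lt (bitVal_lt w), Nat.add_zero]

lemma bitVal_injective_of_length_eq {u v : List Bool} (hlen : u.length = v.length)
    (hval : bitVal u = bitVal v) : u = v := by
  induction u using List.reverseRecOn generalizing v with
  | nil => exact (List.eq_nil_of_length_eq_zero hlen.symm).symm
  | append_singleton u b ih =>
    induction v using List.reverseRecOn with
    | nil => simp at hlen
    | append_singleton v c _ =>
      rw [bitVal_append_singleton, bitVal_append_singleton] at hval
      have hbc : b = c ∧ bitVal u = bitVal v := by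
        cases b <;> cases c <;> simp at hval ⊢ <;> omega
      rw [ih (by simpa using hlen) hbc.2, hbc.1]

lemma exists_length_eq_bitVal_eq (h m : ℕ) (hm : m < 2 ^ h) :
    ∃ w : List Bool, w.length = h ∧ bitVal w = m := by
  induction h generalizing m with
  | zero => exact ⟨[], rfl, by simp_all [bitVal]⟩
  | succ h ih =>
    obtain ⟨w, hlen, hval⟩ := ih (m / 2) (by rw [pow_succ] at hm; omega)
    refine ⟨w ++ [decide (m % 2 = 1)], by simp [hlen], ?_⟩
    rw [bitVal_append_singleton, hval]
    rcases Nat.mod_two_eq_zero_or_one m with hp | hp <;> simp [hp] <;> omega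

lemma mem_seg_iff {h m : ℕ} {u : List Bool} :
    m ∈ seg h u ↔ m / 2 ^ (h - u.length) = bitVal u := by
  constructor
  · rintro ⟨hlo, hhi⟩
    exact Nat.div_eq_of_lt_le hlo hhi
  · rintro hm
    simp only [seg, Set.mem_ofPred_eq, ← hm]
    refine ⟨Nat.div_mul_le_self _ _, ?_⟩
    rw [Nat.add_one_mul]
    exact Nat.lt_div_mul_add (by positivity)

lemma seg_eq_singleton {h : ℕ} {w : List Bool} (hw : w.length = h) : seg h w = {bitVal w} := by
  ext m
  simp [mem_seg_iff, hw]

lemma seg_subset_seg_of_prefix {h : ℕ} {u v : List Bool} (huv : u <+: v) (hv : v.length ≤ h) :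
    seg h v ⊆ seg h u := by
  obtain ⟨w, rfl⟩ := huv
  intro m hm
  rw [mem_seg_iff] at hm ⊢
  have hexp : h - u.length = (h - (u ++ w).length) + w.length := by
    simp only [List.length_append] at hv ⊢; omega
  rw [hexp, pow_add, ← Nat.div_div_eq_div_mul, hm, bitVal_append_div]

lemma prefix_of_mem_seg_of_mem_seg {h m : ℕ} {u v : List Bool} (hlen : u.length ≤ v.length)
    (hv : v.length ≤ h) (hmu : m ∈ seg h u) (hmv : m ∈ seg h v) : u <+: v := by
  have htake : v.take u.length <+: v := List.take_prefix _ _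
  have hmt : m ∈ seg h (v.take u.length) := seg_subset_seg_of_prefix htake hv hmv
  have hlen_take : (v.take u.length).length = u.length := by simp [hlen]
  rw [mem_seg_iff, hlen_take] at hmt
  rw [mem_seg_iff] at hmu
  rwa [bitVal_injective_of_length_eq hlen_take.symm (hmu.symm.trans hmt)]

lemma eq_of_mem_CP_of_mem_seg {h a b m : ℕ} {u v : List Bool} (hu : u ∈ CP h a b)
    (hv : v ∈ CP h a b) (hmu : m ∈ seg h u) (hmv : m ∈ seg h v) : u = v := by
  obtain ⟨hul, hus, humin⟩ := hu
  obtain ⟨hvl, hvs, hvmin⟩ := hv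
  rcases le_total u.length v.length with hlen | hlen
  · by_contra hne
    exact hvmin u (prefix_of_mem_seg_of_mem_seg hlen hvl hmu hmv) hne hus
  · by_contra hne
    exact humin v (prefix_of_mem_seg_of_mem_seg hlen hul hmv hmu) (Ne.symm hne) hvs

lemma exists_mem_CP_mem_seg {h a b m : ℕ} (hb : b ≤ 2 ^ h) (ham : a ≤ m) (hmb : m < b) :
    ∃ u ∈ CP h a b, m ∈ seg h u := by
  obtain ⟨w, hwlen, hwval⟩ := exists_length_eq_bitVal_eq h m (by omega)
  have hw : seg h w ⊆ Set.Ico a b := by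
    rw [seg_eq_singleton hwlen, hwval, Set.singleton_subset_iff]
    exact ⟨ham, hmb⟩
  obtain ⟨u, huw, hu, humin⟩ := List.exists_minimal_prefix (seg h · ⊆ Set.Ico a b) w hw
  refine ⟨u, ⟨huw.length_le.trans hwlen.le, hu, humin⟩, ?_⟩
  apply seg_subset_seg_of_prefix huw hwlen.le
  simp [seg_eq_singleton hwlen, hwval]

theorem canonical_partition_is_partition_general
    (h a b : ℕ) (hb : b ≤ 2 ^ h) :
    (∀ u ∈ CP h a b, ∀ v ∈ CP h a b, u ≠ v → seg h u ∩ seg h v = ∅) ∧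
    (∀ m : ℕ, a ≤ m → m < b → ∃! u : List Bool, u ∈ CP h a b ∧ m ∈ seg h u) := by
  refine ⟨fun u hu v hv hne => ?_, fun m ham hmb => ?_⟩
  · exact Set.eq_empty_of_forall_notMem fun m ⟨hmu, hmv⟩ =>
      hne (eq_of_mem_CP_of_mem_seg hu hv hmu hmv)
  · obtain ⟨u, hu, hmu⟩ := exists_mem_CP_mem_seg hb ham hmb
    exact ⟨u, ⟨hu, hmu⟩, fun v ⟨hv, hmv⟩ => eq_of_mem_CP_of_mem_seg hv hu hmv hmu⟩

/-- For `a < b ≤ 2^h`, the canonical partition `CP_h(a, b)` is a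
partition of `{m : a ≤ m < b}`: the segments of distinct elements of `CP_h(a, b)` are
disjoint, and every `m` with `a ≤ m < b` lies in `seg_h(u)` for exactly one
`u ∈ CP_h(a, b)`. -/
theorem canonical_partition_is_partition
    (h a b : ℕ) (hab : a < b) (hb : b ≤ 2 ^ h) :
    (∀ u ∈ CP h a b, ∀ v ∈ CP h a b, u ≠ v → seg h u ∩ seg h v = ∅) ∧
    (∀ m : ℕ, a ≤ m → m < b → ∃! u : List Bool, u ∈ CP h a b ∧ m ∈ seg h u) :=
  canonical_partition_is_partition_general h a b hb
end

section
/- Let H = (V, E) be a hypergraph. If H is not conformal, i.e., there exists a finite set S ⊆ V with |S| ≥ 3 such that M(E[S]) = {S \ {x} : x ∈ S}, then H has a Berge cycle of length 3. -/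
/-- The cyclic successor of an index in `Fin k`. -/
def nextIdx {k : ℕ} (i : Fin k) : Fin k :=
  ⟨(i.val + 1) % k, Nat.mod_lt _ i.pos⟩

/-- A Berge cycle of length `k ≥ 2` in the hypergraph with hyperedge family `E`:
pairwise distinct hyperedges (distinguished by their index) `e 0, …, e (k−1)` and
pairwise distinct vertices `v 0, …, v (k−1)` with `v i ∈ E (e i)` and
`v i ∈ E (e (i+1))` (cyclically). -/
def HasBergeCycle {V ι : Type*} (E : ι → Finset V) (k : ℕ) : Prop :=
  2 ≤ k ∧ ∃ (e : Fin k → ι) (v : Fin k → V),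
    Function.Injective e ∧ Function.Injective v ∧
    ∀ i : Fin k, v i ∈ E (e i) ∧ v i ∈ E (e (nextIdx i))

/-- The induced set `E[S] = {e ∩ S : e ∈ E, e ∩ S ≠ ∅}`. -/
def inducedSet {V ι : Type*} [DecidableEq V] (E : ι → Finset V) (S : Finset V) :
    Set (Finset V) :=
  {t | t.Nonempty ∧ ∃ i, t = E i ∩ S}

/-- The minimisation `M(F) = {e ∈ F : ¬∃ f ∈ F, e ⊊ f}` of a family of sets. -/
def minimize {V : Type*} (F : Set (Finset V)) : Set (Finset V) :=
  {e ∈ F | ¬ ∃ f ∈ F, e ⊂ f}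

/-- If a hypergraph `(V, E)` (hyperedges are nonempty finite sets
indexed by a finite type) is not conformal — i.e., there is a finite `S ⊆ V` with
`|S| ≥ 3` and `M(E[S]) = {S \ {x} : x ∈ S}` — then it has a Berge cycle of
length `3`. -/
theorem non_conformal_implies_berge_cycle_three
    {V ι : Type*} [DecidableEq V] [Fintype ι]
    (E : ι → Finset V) (hE : ∀ i, (E i).Nonempty)
    (S : Finset V) (hS : 3 ≤ S.card)
    (hconf : minimize (inducedSet E S) = {t | ∃ x ∈ S, t = S.erase x}) :
    HasBergeCycle E 3 := by
  obtain ⟨x1, x2, x3, hx1, hx2, hx3, h12, h13, h23⟩ := Finset.two_lt_card_iff.mp hS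
  have key : ∀ x ∈ S, ∃ i, E i ∩ S = S.erase x := by
    intro x hx
    have : S.erase x ∈ minimize (inducedSet E S) := by
      rw [hconf]; exact ⟨x, hx, rfl⟩
    obtain ⟨⟨-, i, hi⟩, -⟩ := this
    exact ⟨i, hi.symm⟩
  obtain ⟨i1, hi1⟩ := key x1 hx1
  obtain ⟨i2, hi2⟩ := key x2 hx2
  obtain ⟨i3, hi3⟩ := key x3 hx3
  have mem : ∀ (i : ι) (a b : V), E i ∩ S = S.erase a → b ∈ S → b ≠ a → b ∈ E i := by
    intro i a b hi hb hba
    have : b ∈ E i ∩ S := by rw [hi]; exact Finset.mem_erase.mpr ⟨hba, hb⟩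
    exact (Finset.mem_inter.mp this).1
  have edist : ∀ (i : ι) (a b : V), E i ∩ S = S.erase a → E i ∩ S = S.erase b →
      b ∈ S → a ≠ b → False := by
    intro i a b hi hj hb hab
    have he : S.erase a = S.erase b := hi.symm.trans hj
    have : b ∈ S.erase b := he ▸ Finset.mem_erase.mpr ⟨Ne.symm hab, hb⟩
    exact (Finset.mem_erase.mp this).1 rfl
  have ne12 : i1 ≠ i2 := fun h => edist i1 x1 x2 hi1 (by rw [h]; exact hi2) hx2 h12
  have ne13 : i1 ≠ i3 := fun h => edist i1 x1 x3 hi1 (by rw [h]; exact hi3) hx3 h13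
  have ne23 : i2 ≠ i3 := fun h => edist i2 x2 x3 hi2 (by rw [h]; exact hi3) hx3 h23
  have ne21 := ne12.symm; have ne31 := ne13.symm; have ne32 := ne23.symm
  have h21 := h12.symm; have h31 := h13.symm; have h32 := h23.symm
  refine ⟨by norm_num, ![i1, i2, i3], ![x3, x1, x2], ?_, ?_, ?_⟩
  · intro a b hab
    fin_cases a <;> fin_cases b <;> simp_all
  · intro a b hab
    fin_cases a <;> fin_cases b <;> simp_all
  · intro i
    fin_cases i
    · exact ⟨mem i1 x1 x3 hi1 hx3 h31, mem i2 x2 x3 hi2 hx3 h32⟩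
    · exact ⟨mem i2 x2 x1 hi2 hx1 h12, mem i3 x3 x1 hi3 hx1 h13⟩
    · exact ⟨mem i3 x3 x2 hi3 hx2 h23, mem i1 x1 x2 hi1 hx2 h21⟩
end

section
/- Let H = (V, E) be a hypergraph. If H is not cycle-free, i.e., there exist k ≥ 3 and pairwise distinct vertices v^1, …, v^k such that M(E[{v^1, …, v^k}]) = {{v^i, v^{i+1}} : 1 ≤ i < k} ∪ {{v^k, v^1}}, then H has a Berge cycle of length k. -/
/-- If a hypergraph `(V, E)` (hyperedges are nonempty finite sets
indexed by a finite type) is not cycle-free — i.e., there are `k ≥ 3` and pairwise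
distinct vertices `v 0, …, v (k−1)` with
`M(E[{v 0, …, v (k−1)}]) = {{v i, v (i+1)} : i} ∪ {{v (k−1), v 0}}` — then it has a
Berge cycle of length `k`. -/
theorem non_cycle_free_implies_berge_cycle
    {V ι : Type*} [DecidableEq V] [Fintype ι]
    (E : ι → Finset V) (hE : ∀ i, (E i).Nonempty)
    (k : ℕ) (hk : 3 ≤ k) (v : Fin k → V) (hv : Function.Injective v)
    (hcyc : minimize (inducedSet E (Finset.image v Finset.univ)) =
      {t | ∃ i : Fin k, t = {v i, v (nextIdx i)}}) :
    HasBergeCycle E k := by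
  classical
  haveI : NeZero k := ⟨by omega⟩
  set S := Finset.image v Finset.univ with hS
  have hmod : ∀ a : Fin k, (nextIdx a).val = if a.val + 1 = k then 0 else a.val + 1 := by
    intro a
    simp only [nextIdx]
    split_ifs with h
    · rw [h, Nat.mod_self]
    · exact Nat.mod_eq_of_lt (by have := a.isLt; omega)
  have hnextinj : Function.Injective (nextIdx (k := k)) := by
    intro a b h
    have h' := congrArg Fin.val h
    rw [hmod, hmod] at h'
    have ha := a.isLt; have hb := b.isLt
    apply Fin.ext
    split_ifs at h' <;> omega
  have hnext_add : ∀ i : Fin k, nextIdx i = i + 1 := by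
    intro i
    apply Fin.ext
    rw [Fin.add_def, Fin.val_one']
    simp only [nextIdx]
    rw [Nat.mod_eq_of_lt (show 1 < k by omega)]
  have hmem : ∀ i : Fin k, ({v i, v (nextIdx i)} : Finset V) ∈
      minimize (inducedSet E S) := by
    intro i
    rw [hcyc]
    exact ⟨i, rfl⟩
  have hchoice : ∀ i : Fin k, ∃ j : ι, ({v i, v (nextIdx i)} : Finset V) = E j ∩ S :=
    fun i => (hmem i).1.2
  choose f hf using hchoice
  have hvif : ∀ i, v i ∈ E (f i) := by
    intro i
    have : v i ∈ E (f i) ∩ S := by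
      rw [← hf i]; simp
    exact (Finset.mem_inter.1 this).1
  have hvnf : ∀ i, v (nextIdx i) ∈ E (f i) := by
    intro i
    have : v (nextIdx i) ∈ E (f i) ∩ S := by
      rw [← hf i]; simp
    exact (Finset.mem_inter.1 this).1
  have hfinj : Function.Injective f := by
    intro i j hij
    have heq : ({v i, v (nextIdx i)} : Finset V) = {v j, v (nextIdx j)} := by
      rw [hf i, hf j, hij]
    have h1 : v i = v j ∨ v i = v (nextIdx j) := by
      have : v i ∈ ({v j, v (nextIdx j)} : Finset V) := by
        rw [← heq]; simp
      simpa using this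
    have h2 : v (nextIdx i) = v j ∨ v (nextIdx i) = v (nextIdx j) := by
      have : v (nextIdx i) ∈ ({v j, v (nextIdx j)} : Finset V) := by
        rw [← heq]; simp
      simpa using this
    rcases h1 with h1 | h1
    · exact hv h1
    · rcases h2 with h2 | h2
      · -- i = nextIdx j and nextIdx i = j : contradiction for k ≥ 3
        have e1 : i = nextIdx j := hv h1
        have e2 : nextIdx i = j := hv h2
        have e1' := congrArg Fin.val e1
        have e2' := congrArg Fin.val e2
        rw [hmod] at e1' e2'
        have hi := i.isLt; have hj := j.isLt
        exfalso
        split_ifs at e1' e2' <;> omega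
      · exact hnextinj (hv h2)
  refine ⟨by omega, fun i => f (i - 1), v, ?_, hv, ?_⟩
  · intro a b h
    have := hfinj h
    exact sub_left_injective this
  · intro i
    constructor
    · have := hvnf (i - 1)
      rwa [hnext_add, sub_add_cancel] at this
    · have : nextIdx i - 1 = i := by rw [hnext_add]; exact add_sub_cancel_right i 1
      show v i ∈ E (f (nextIdx i - 1))
      rw [this]
      exact hvif i
end

section
/- Let H = (V, E) be a hypergraph. If H has no Berge cycle of length ≥ 3, then H is γ-acyclic; that is, H is cycle-free and there are no three distinct vertices x, y, z ∈ V with {x, y}, {x, z}, and {x, y, z} all belonging to the induced set E[{x, y, z}]. -/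
lemma nextIdx_val {k : ℕ} (i : Fin k) : (nextIdx i).val = (i.val + 1) % k := rfl

lemma nextIdx_ne {k : ℕ} (hk : 2 ≤ k) (i : Fin k) : nextIdx i ≠ i := by
  intro h
  have := congrArg Fin.val h
  rw [nextIdx_val] at this
  rcases Nat.lt_or_ge (i.val + 1) k with h1 | h1
  · rw [Nat.mod_eq_of_lt h1] at this; omega
  · have h2 : i.val + 1 = k := by omega
    rw [h2, Nat.mod_self] at this
    omega

lemma nextIdx_nextIdx_ne {k : ℕ} (hk : 3 ≤ k) (i : Fin k) : nextIdx (nextIdx i) ≠ i := by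
  intro h
  have := congrArg Fin.val h
  rw [nextIdx_val, nextIdx_val] at this
  have hi := i.isLt
  rcases Nat.lt_or_ge (i.val + 1) k with h1 | h1
  · rw [Nat.mod_eq_of_lt h1] at this
    rcases Nat.lt_or_ge (i.val + 2) k with h2 | h2
    · rw [Nat.mod_eq_of_lt h2] at this; omega
    · have h3 : i.val + 1 + 1 = k := by omega
      rw [h3, Nat.mod_self] at this; omega
  · have h2 : i.val + 1 = k := by omega
    rw [h2, Nat.mod_self] at this
    rw [Nat.mod_eq_of_lt (by omega : 0 + 1 < k)] at this
    omega

lemma nextIdx_injective {k : ℕ} : Function.Injective (nextIdx (k := k)) := by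
  intro a b h
  have := congrArg Fin.val h
  rw [nextIdx_val, nextIdx_val] at this
  have ha := a.isLt
  have hb := b.isLt
  apply Fin.ext
  rcases Nat.lt_or_ge (a.val + 1) k with h1 | h1 <;>
    rcases Nat.lt_or_ge (b.val + 1) k with h2 | h2
  · rw [Nat.mod_eq_of_lt h1, Nat.mod_eq_of_lt h2] at this; omega
  · have hb2 : b.val + 1 = k := by omega
    rw [Nat.mod_eq_of_lt h1, hb2, Nat.mod_self] at this; omega
  · have ha2 : a.val + 1 = k := by omega
    rw [ha2, Nat.mod_self, Nat.mod_eq_of_lt h2] at this; omega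
  · omega

/-- If a hypergraph `(V, E)` (hyperedges are nonempty finite sets
indexed by a finite type) has no Berge cycle of length `≥ 3`, then it is γ-acyclic:
it is cycle-free, and there are no three distinct vertices `x, y, z` with
`{x, y}`, `{x, z}`, `{x, y, z}` all in `E[{x, y, z}]`. -/
theorem no_long_berge_cycle_implies_gamma_acyclic
    {V ι : Type*} [DecidableEq V] [Fintype ι]
    (E : ι → Finset V) (hE : ∀ i, (E i).Nonempty)
    (hno : ∀ k, 3 ≤ k → ¬ HasBergeCycle E k) :
    (¬ ∃ (n : ℕ) (_ : 3 ≤ n) (v : Fin n → V), Function.Injective v ∧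
        minimize (inducedSet E (Finset.image v Finset.univ)) =
          {t | ∃ i : Fin n, t = {v i, v (nextIdx i)}}) ∧
    (¬ ∃ x y z : V, x ≠ y ∧ x ≠ z ∧ y ≠ z ∧
        ({x, y} : Finset V) ∈ inducedSet E {x, y, z} ∧
        ({x, z} : Finset V) ∈ inducedSet E {x, y, z} ∧
        ({x, y, z} : Finset V) ∈ inducedSet E {x, y, z}) := by
  constructor
  · rintro ⟨n, hn, v, hv, heq⟩
    -- each pair {v i, v (nextIdx i)} is in the induced set
    have hmem : ∀ i : Fin n, ({v i, v (nextIdx i)} : Finset V) ∈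
        inducedSet E (Finset.image v Finset.univ) := by
      intro i
      have : ({v i, v (nextIdx i)} : Finset V) ∈
          minimize (inducedSet E (Finset.image v Finset.univ)) := by
        rw [heq]; exact ⟨i, rfl⟩
      exact this.1
    choose e he using fun i => (hmem i).2
    refine hno n hn ⟨by omega, e, fun i => v (nextIdx i), ?_, ?_, ?_⟩
    · -- injectivity of e
      intro a b hab
      have h : ({v a, v (nextIdx a)} : Finset V) = {v b, v (nextIdx b)} := by
        rw [he a, he b, hab]
      have hva : v a ∈ ({v b, v (nextIdx b)} : Finset V) := by
        rw [← h]; simp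
      have hvna : v (nextIdx a) ∈ ({v b, v (nextIdx b)} : Finset V) := by
        rw [← h]; simp
      simp only [Finset.mem_insert, Finset.mem_singleton] at hva hvna
      rcases hva with hva | hva
      · exact hv hva
      · have ha : a = nextIdx b := hv hva
        rcases hvna with hvna | hvna
        · have : nextIdx a = b := hv hvna
          exfalso
          exact nextIdx_nextIdx_ne (by omega) b (by rw [← ha, this])
        · have h2 : nextIdx a = nextIdx b := hv hvna
          exact absurd (ha.trans h2.symm).symm (nextIdx_ne (by omega) a)
    · exact fun a b hab => nextIdx_injective (hv hab)
    · intro i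
      constructor
      · have : v (nextIdx i) ∈ ({v i, v (nextIdx i)} : Finset V) := by simp
        rw [he i] at this
        exact (Finset.mem_inter.mp this).1
      · have : v (nextIdx i) ∈ ({v (nextIdx i), v (nextIdx (nextIdx i))} : Finset V) := by
          simp
        rw [he (nextIdx i)] at this
        exact (Finset.mem_inter.mp this).1
  · rintro ⟨x, y, z, hxy, hxz, hyz, ⟨_, i1, h1⟩, ⟨_, i2, h2⟩, ⟨_, i3, h3⟩⟩
    -- build a Berge cycle of length 3: edges i1 ({x,y}), i3 ({x,y,z}), i2 ({x,z});
    -- vertices y, z, x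
    have h12 : i1 ≠ i2 := by
      intro h; rw [h, ← h2] at h1
      have : y ∈ ({x, z} : Finset V) := by rw [← h1]; simp
      simp at this; tauto
    have h13 : i1 ≠ i3 := by
      intro h; rw [h, ← h3] at h1
      have : z ∈ ({x, y} : Finset V) := by rw [h1]; simp
      simp at this; tauto
    have h23 : i2 ≠ i3 := by
      intro h; rw [h, ← h3] at h2
      have : y ∈ ({x, z} : Finset V) := by rw [h2]; simp
      simp at this; tauto
    have hy1 : y ∈ E i1 := by
      have : y ∈ ({x, y} : Finset V) := by simp
      rw [h1] at this; exact (Finset.mem_inter.mp this).1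
    have hx1 : x ∈ E i1 := by
      have : x ∈ ({x, y} : Finset V) := by simp
      rw [h1] at this; exact (Finset.mem_inter.mp this).1
    have hz2 : z ∈ E i2 := by
      have : z ∈ ({x, z} : Finset V) := by simp
      rw [h2] at this; exact (Finset.mem_inter.mp this).1
    have hx2 : x ∈ E i2 := by
      have : x ∈ ({x, z} : Finset V) := by simp
      rw [h2] at this; exact (Finset.mem_inter.mp this).1
    have hy3 : y ∈ E i3 := by
      have : y ∈ ({x, y, z} : Finset V) := by simp
      rw [h3] at this; exact (Finset.mem_inter.mp this).1
    have hz3 : z ∈ E i3 := by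
      have : z ∈ ({x, y, z} : Finset V) := by simp
      rw [h3] at this; exact (Finset.mem_inter.mp this).1
    refine hno 3 le_rfl ⟨by omega, ![i1, i3, i2], ![y, z, x], ?_, ?_, ?_⟩
    · intro a b hab
      fin_cases a <;> fin_cases b <;> simp at hab ⊢ <;> tauto
    · intro a b hab
      fin_cases a <;> fin_cases b <;> simp at hab ⊢ <;> tauto
    · intro i
      fin_cases i <;> simp [nextIdx] <;> exact ⟨by assumption, by assumption⟩
end

section
/- Let H = (V, E) be a hypergraph, let S ⊆ V be a finite set with |S| ≥ 3, and let u, v ∈ S be distinct vertices such that every hyperedge e ∈ E with v ∈ e also satisfies u ∈ e. Then M(E[S]) ≠ {S \ {x} : x ∈ S}. -/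
/-- Let `(V, E)` be a hypergraph (hyperedges are nonempty finite
sets indexed by a finite type), `S ⊆ V` finite with `|S| ≥ 3`, and `u ≠ v` two
vertices of `S` such that every hyperedge containing `v` also contains `u`. Then
`M(E[S]) ≠ {S \ {x} : x ∈ S}`. -/
theorem minimized_induced_not_all_coerasures
    {V ι : Type*} [DecidableEq V] [Fintype ι]
    (E : ι → Finset V) (hE : ∀ i, (E i).Nonempty)
    (S : Finset V) (hS : 3 ≤ S.card)
    (u v : V) (hu : u ∈ S) (hv : v ∈ S) (huv : u ≠ v)
    (himp : ∀ i, v ∈ E i → u ∈ E i) :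
    minimize (inducedSet E S) ≠ {t | ∃ x ∈ S, t = S.erase x} := by
  intro h
  have hmem : S.erase u ∈ minimize (inducedSet E S) := by
    rw [h]; exact ⟨u, hu, rfl⟩
  obtain ⟨⟨-, i, hi⟩, -⟩ := hmem
  have hvE : v ∈ E i := by
    have : v ∈ S.erase u := Finset.mem_erase.2 ⟨Ne.symm huv, hv⟩
    rw [hi] at this
    exact (Finset.mem_inter.1 this).1
  have : u ∈ S.erase u := by
    rw [hi]; exact Finset.mem_inter.2 ⟨himp i hvE, hu⟩
  exact (Finset.notMem_erase u S) this
end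

section
/- Let H = (V, E) be a hypergraph, let k ≥ 3, and let v^1, …, v^k ∈ V be pairwise distinct vertices. Suppose there exist indices i ≠ j in [k] such that every hyperedge e ∈ E with v^i ∈ e also satisfies v^j ∈ e (or every hyperedge containing v^j also contains v^i). Then M(E[{v^1, …, v^k}]) ≠ {{v^i, v^{i+1}} : 1 ≤ i < k} ∪ {{v^k, v^1}}. -/
lemma nextIdx_eq_add_one {k : ℕ} [NeZero k] (hk : 1 < k) (x : Fin k) : nextIdx x = x + 1 := by
  apply Fin.ext
  simp [nextIdx, Fin.add_def, Fin.val_one', Nat.mod_eq_of_lt hk]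

lemma aux_case {V ι : Type*} [DecidableEq V] [Fintype ι]
    (E : ι → Finset V)
    (k : ℕ) (hk : 3 ≤ k) (v : Fin k → V) (hv : Function.Injective v)
    (i j : Fin k) (hij : i ≠ j)
    (hI : ∀ e, v i ∈ E e → v j ∈ E e)
    (h : minimize (inducedSet E (Finset.image v Finset.univ)) =
      {t | ∃ i : Fin k, t = {v i, v (nextIdx i)}}) : False := by
  haveI : NeZero k := ⟨by omega⟩
  have hk1 : 1 < k := by omega
  have key : ∀ a : Fin k, v i ∈ ({v a, v (nextIdx a)} : Finset V) →
      j = a ∨ j = nextIdx a := by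
    intro a hia
    have hmem : ({v a, v (nextIdx a)} : Finset V) ∈
        minimize (inducedSet E (Finset.image v Finset.univ)) := by
      rw [h]; exact ⟨a, rfl⟩
    obtain ⟨⟨_, e, he⟩, -⟩ := hmem
    have hiE : v i ∈ E e ∩ Finset.image v Finset.univ := by rw [← he]; exact hia
    have hjE : v j ∈ E e := hI e (Finset.mem_inter.1 hiE).1
    have hjS : v j ∈ Finset.image v Finset.univ :=
      Finset.mem_image.2 ⟨j, Finset.mem_univ _, rfl⟩
    have : v j ∈ ({v a, v (nextIdx a)} : Finset V) := by
      rw [he]; exact Finset.mem_inter.2 ⟨hjE, hjS⟩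
    rcases Finset.mem_insert.1 this with h' | h'
    · exact Or.inl (hv h')
    · exact Or.inr (hv (Finset.mem_singleton.1 h'))
  have h1 : j = nextIdx i := by
    rcases key i (Finset.mem_insert_self _ _) with h' | h'
    · exact absurd h'.symm hij
    · exact h'
  have h2 : j = i - 1 := by
    have hni : nextIdx (i - 1) = i := by
      rw [nextIdx_eq_add_one hk1, sub_add_cancel]
    have : v i ∈ ({v (i - 1), v (nextIdx (i - 1))} : Finset V) := by
      rw [hni]; exact Finset.mem_insert.2 (Or.inr (Finset.mem_singleton_self _))
    rcases key (i - 1) this with h' | h'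
    · exact h'
    · rw [hni] at h'; exact absurd h'.symm hij
  rw [nextIdx_eq_add_one hk1] at h1
  have h3 : i + 1 + 1 = i := by rw [h1.symm.trans h2, sub_add_cancel]
  have hv2 : (i.val + 1 + 1) % k = i.val := by
    have := congrArg Fin.val h3
    simp only [Fin.add_def, Fin.val_one', Nat.mod_eq_of_lt hk1] at this
    rwa [Nat.mod_add_mod] at this
  have hik : i.val < k := i.isLt
  rcases Nat.lt_or_ge (i.val + 2) k with hlt | hge
  · rw [show i.val + 1 + 1 = i.val + 2 by omega, Nat.mod_eq_of_lt hlt] at hv2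
    omega
  · rw [show i.val + 1 + 1 = i.val + 2 by omega, Nat.mod_eq_sub_mod hge,
      Nat.mod_eq_of_lt (by omega)] at hv2
    omega

/-- Let `(V, E)` be a hypergraph (hyperedges are nonempty finite
sets indexed by a finite type), `k ≥ 3`, and `v 0, …, v (k−1)` pairwise distinct
vertices. If there are indices `i ≠ j` such that every hyperedge containing `v i`
also contains `v j` (or vice versa), then `M(E[{v 0, …, v (k−1)}])` is not exactly
the chordless-cycle edge set `{{v i, v (i+1)} : i} ∪ {{v (k−1), v 0}}`. -/
theorem minimized_induced_not_chordless_cycle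
    {V ι : Type*} [DecidableEq V] [Fintype ι]
    (E : ι → Finset V) (hE : ∀ e, (E e).Nonempty)
    (k : ℕ) (hk : 3 ≤ k) (v : Fin k → V) (hv : Function.Injective v)
    (i j : Fin k) (hij : i ≠ j)
    (himp : (∀ e, v i ∈ E e → v j ∈ E e) ∨ (∀ e, v j ∈ E e → v i ∈ E e)) :
    minimize (inducedSet E (Finset.image v Finset.univ)) ≠
      {t | ∃ i : Fin k, t = {v i, v (nextIdx i)}} := by
  intro h
  rcases himp with hI | hI
  · exact aux_case E k hk v hv i j hij hI h
  · exact aux_case E k hk v hv j i hij.symm hI h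
end
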